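/- arXiv:0905.2134 — 9 statements merged into one kernel-verified Lean document; each statement's English description precedes it below -/
import Mathlib

section
/- Let B : ℝ → Matrix (Fin 4) (Fin 4) ℝ be continuous with B(x) symmetric for every x, and let J be the standard 4×4 symplectic matrix. If u, v : ℝ → ℝ⁴ are differentiable solutions of J u'(x) = B(x) u(x) and J v'(x) = B(x) v(x) on ℝ, and both u(x) → 0 and v(x) → 0 as x → −∞, then ⟨J u(x), v(x)⟩ = 0 for every x ∈ ℝ. In particular, the unstable subspace E^u(x) spanned by such solutions is a Lagrangian subspace for every x. -/
open Matrix Filter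

/-- The standard symplectic matrix on `ℝ⁴`, `J = [[0, -I₂],[I₂, 0]]` in 2×2 blocks. -/
def J4 : Matrix (Fin 4) (Fin 4) ℝ :=
  !![0, 0, -1, 0; 0, 0, 0, -1; 1, 0, 0, 0; 0, 1, 0, 0]

lemma J4_antisymm (a b : Fin 4 → ℝ) : J4.mulVec a ⬝ᵥ b = -(J4.mulVec b ⬝ᵥ a) := by
  simp [J4, mulVec, dotProduct, Fin.sum_univ_four, Matrix.vecHead, Matrix.vecTail]; ring

lemma symm_swap (M : Matrix (Fin 4) (Fin 4) ℝ) (hM : M.IsSymm) (a b : Fin 4 → ℝ) :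
    M.mulVec a ⬝ᵥ b = M.mulVec b ⬝ᵥ a := by
  rw [show M.mulVec a ⬝ᵥ b = a ⬝ᵥ Mᵀ.mulVec b by
    rw [Matrix.dotProduct_mulVec, Matrix.vecMul_transpose], hM.eq,
    dotProduct_comm]

/-- If `u, v` are differentiable solutions of the linear Hamiltonian system
`J u' = B(x) u` with `B(x)` symmetric, and both `u` and `v` tend to `0` as `x → -∞`,
then `⟨J u(x), v(x)⟩ = 0` for every `x`; i.e. the unstable subspace is Lagrangian. -/
theorem stmt1 (B : ℝ → Matrix (Fin 4) (Fin 4) ℝ) (hB : Continuous B)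
    (hBsymm : ∀ x, (B x).IsSymm)
    (u v : ℝ → Fin 4 → ℝ) (hu : Differentiable ℝ u) (hv : Differentiable ℝ v)
    (hu' : ∀ x, J4.mulVec (deriv u x) = (B x).mulVec (u x))
    (hv' : ∀ x, J4.mulVec (deriv v x) = (B x).mulVec (v x))
    (hu0 : Tendsto u atBot (nhds 0)) (hv0 : Tendsto v atBot (nhds 0)) :
    ∀ x : ℝ, J4.mulVec (u x) ⬝ᵥ v x = 0 := by
  set f : ℝ → ℝ := fun x => J4.mulVec (u x) ⬝ᵥ v x with hf
  have hderiv : ∀ x, HasDerivAt f 0 x := by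
    intro x
    have hui : ∀ i, HasDerivAt (fun x => u x i) (deriv u x i) x :=
      hasDerivAt_pi.mp ((hu x).hasDerivAt)
    have hvi : ∀ i, HasDerivAt (fun x => v x i) (deriv v x i) x :=
      hasDerivAt_pi.mp ((hv x).hasDerivAt)
    have key : J4.mulVec (deriv u x) ⬝ᵥ v x + J4.mulVec (u x) ⬝ᵥ deriv v x = 0 := by
      rw [J4_antisymm (u x) (deriv v x), hu' x, hv' x,
        symm_swap (B x) (hBsymm x) (v x) (u x)]
      ring
    have : HasDerivAt f
        (J4.mulVec (deriv u x) ⬝ᵥ v x + J4.mulVec (u x) ⬝ᵥ deriv v x) x := by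
      have : HasDerivAt (fun x => ∑ i, (∑ j, J4 i j * u x j) * v x i)
          (∑ i, ((∑ j, J4 i j * deriv u x j) * v x i
            + (∑ j, J4 i j * u x j) * deriv v x i)) x := by
        apply HasDerivAt.fun_sum
        intro i _
        exact (HasDerivAt.fun_sum (fun j _ => (hui j).const_mul (J4 i j))).mul (hvi i)
      simpa [hf, mulVec, dotProduct, Finset.sum_add_distrib] using this
    simpa [key] using this
  have hconst : ∀ x y, f x = f y := by
    have hdf : Differentiable ℝ f := fun x => (hderiv x).differentiableAt
    intro x y
    exact is_const_of_deriv_eq_zero hdf (fun x => (hderiv x).deriv) x y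
  have hcont : Continuous fun p : (Fin 4 → ℝ) × (Fin 4 → ℝ) => J4.mulVec p.1 ⬝ᵥ p.2 := by
    unfold Matrix.mulVec dotProduct
    fun_prop
  have hlim : Tendsto f atBot (nhds 0) := by
    have := (hcont.tendsto (0, 0)).comp (hu0.prodMk_nhds hv0)
    simpa [hf, Function.comp_def] using this
  intro x
  have h1 : Tendsto f atBot (nhds (f x)) := by
    have : f = fun _ => f x := funext fun y => hconst y x
    rw [this]; exact tendsto_const_nhds
  exact tendsto_nhds_unique h1 hlim
end

section
/- Let A : ℝ → Matrix (Fin 4) (Fin 4) ℝ be continuous with J·A(x) symmetric for every x (so in particular Trace A(x) = 0 and the induced derivation A(x)^(2) on Λ²(ℝ⁴) annihilates ω). If U : ℝ → Λ²(ℝ⁴) is differentiable and U'(x) = A(x)^(2) U(x) for all x, then both x ↦ U(x)∧U(x) ∈ Λ⁴(ℝ⁴) and x ↦ ω∧U(x) ∈ Λ⁴(ℝ⁴) are constant functions. In particular, if U(x₀)∧U(x₀) = 0 and ω∧U(x₀) = 0 for some x₀, then these hold for all x; that is, the Lagrangian Grassmannian Λ(2) is an invariant manifold of the induced equation U_x =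 A^(2)(x) U. -/
open Matrix

/-- The Plücker coordinates of `u ∧ v ∈ Λ²(ℝ⁴)` with respect to the standard basis
`E₁ = e₁∧e₂, E₂ = e₁∧e₃, E₃ = e₁∧e₄, E₄ = e₂∧e₃, E₅ = e₂∧e₄, E₆ = e₃∧e₄`. -/
def plucker (u v : Fin 4 → ℝ) : Fin 6 → ℝ :=
  ![u 0 * v 1 - u 1 * v 0, u 0 * v 2 - u 2 * v 0, u 0 * v 3 - u 3 * v 0,
    u 1 * v 2 - u 2 * v 1, u 1 * v 3 - u 3 * v 1, u 2 * v 3 - u 3 * v 2]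

/-- The coefficient of `vol = e₁∧e₂∧e₃∧e₄` in the exterior product `U ∧ V ∈ Λ⁴(ℝ⁴)`
of two 2-forms given in Plücker coordinates. -/
def wedge4 (U V : Fin 6 → ℝ) : ℝ :=
  U 0 * V 5 + U 5 * V 0 - U 1 * V 4 - U 4 * V 1 + U 2 * V 3 + U 3 * V 2

/-- The Plücker coordinates of the symplectic form `ω = e₁∧e₃ + e₂∧e₄`. -/
def omega6 : Fin 6 → ℝ := ![0, 1, 0, 0, 1, 0]


lemma cons_val_five {α : Type*} {m : ℕ} (x : α) (u : Fin (m+5) → α) :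
    Matrix.vecCons x u 5
      = Matrix.vecHead (Matrix.vecTail (Matrix.vecTail (Matrix.vecTail (Matrix.vecTail u)))) :=
  rfl
lemma key_lemma (a : Matrix (Fin 4) (Fin 4) ℝ) (B : Matrix (Fin 6) (Fin 6) ℝ)
    (hs : (J4 * a).IsSymm)
    (hB : ∀ u v : Fin 4 → ℝ, B.mulVec (plucker u v)
        = plucker (a.mulVec u) v + plucker u (a.mulVec v))
    (V : Fin 6 → ℝ) :
    wedge4 (B.mulVec V) V = 0 ∧ (B.mulVec V) 1 + (B.mulVec V) 4 = 0 := by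
  have E : ∀ i j, (J4 * a) i j = (J4 * a) j i := fun i j =>
    congrFun (congrFun hs j) i
  have h1 : a 2 1 = a 3 0 := by
    have := E 0 1; simp [J4, Matrix.mul_apply, Fin.sum_univ_four] at this; linarith
  have h2 : a 0 0 = -a 2 2 := by
    have := E 0 2; simp [J4, Matrix.mul_apply, Fin.sum_univ_four] at this; linarith
  have h3 : a 1 0 = -a 2 3 := by
    have := E 0 3; simp [J4, Matrix.mul_apply, Fin.sum_univ_four] at this; linarith
  have h4 : a 0 1 = -a 3 2 := by
    have := E 1 2; simp [J4, Matrix.mul_apply, Fin.sum_univ_four] at this; linarith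
  have h5 : a 1 1 = -a 3 3 := by
    have := E 1 3; simp [J4, Matrix.mul_apply, Fin.sum_univ_four] at this; linarith
  have h6 : a 0 3 = a 1 2 := by
    have := E 2 3; simp [J4, Matrix.mul_apply, Fin.sum_univ_four] at this; linarith
  have hdec : V = V 0 • plucker ![1,0,0,0] ![0,1,0,0] + V 1 • plucker ![1,0,0,0] ![0,0,1,0]
      + V 2 • plucker ![1,0,0,0] ![0,0,0,1] + V 3 • plucker ![0,1,0,0] ![0,0,1,0]
      + V 4 • plucker ![0,1,0,0] ![0,0,0,1] + V 5 • plucker ![0,0,1,0] ![0,0,0,1] := by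
    funext i; fin_cases i <;> simp [plucker, cons_val_five]
  have hBV : B.mulVec V
      = V 0 • (plucker (a.mulVec ![1,0,0,0]) ![0,1,0,0] + plucker ![1,0,0,0] (a.mulVec ![0,1,0,0]))
      + V 1 • (plucker (a.mulVec ![1,0,0,0]) ![0,0,1,0] + plucker ![1,0,0,0] (a.mulVec ![0,0,1,0]))
      + V 2 • (plucker (a.mulVec ![1,0,0,0]) ![0,0,0,1] + plucker ![1,0,0,0] (a.mulVec ![0,0,0,1]))
      + V 3 • (plucker (a.mulVec ![0,1,0,0]) ![0,0,1,0] + plucker ![0,1,0,0] (a.mulVec ![0,0,1,0]))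
      + V 4 • (plucker (a.mulVec ![0,1,0,0]) ![0,0,0,1] + plucker ![0,1,0,0] (a.mulVec ![0,0,0,1]))
      + V 5 • (plucker (a.mulVec ![0,0,1,0]) ![0,0,0,1] + plucker ![0,0,1,0] (a.mulVec ![0,0,0,1])) := by
    conv_lhs => rw [hdec]
    simp only [Matrix.mulVec_add, Matrix.mulVec_smul, hB]
  rw [hBV]
  constructor
  · simp only [wedge4, plucker, Matrix.mulVec, dotProduct, Fin.sum_univ_four,
      Pi.add_apply, Pi.smul_apply, smul_eq_mul]
    norm_num [cons_val_five, Matrix.cons_val_two, Matrix.cons_val_three, Matrix.cons_val_four]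
    simp only [h1, h2, h3, h4, h5, h6]
    ring
  · simp only [plucker, Matrix.mulVec, dotProduct, Fin.sum_univ_four,
      Pi.add_apply, Pi.smul_apply, smul_eq_mul]
    norm_num [cons_val_five, Matrix.cons_val_two, Matrix.cons_val_three, Matrix.cons_val_four]
    simp only [h1, h2, h3, h4, h5, h6]
    ring

/-- If `J·A(x)` is symmetric for every `x` and `U` solves the induced equation
`U' = A^(2)(x) U` on `Λ²(ℝ⁴)`, then `U∧U` and `ω∧U` are constant; in particular
the Lagrangian Grassmannian (defined by `U∧U = 0`, `ω∧U = 0`) is invariant. -/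
theorem stmt3 (A : ℝ → Matrix (Fin 4) (Fin 4) ℝ) (hA : Continuous A)
    (hsymm : ∀ x, (J4 * A x).IsSymm)
    (A2 : ℝ → Matrix (Fin 6) (Fin 6) ℝ)
    (hA2 : ∀ (x : ℝ) (u v : Fin 4 → ℝ),
      (A2 x).mulVec (plucker u v)
        = plucker ((A x).mulVec u) v + plucker u ((A x).mulVec v))
    (U : ℝ → Fin 6 → ℝ) (hU : Differentiable ℝ U)
    (hode : ∀ x, deriv U x = (A2 x).mulVec (U x)) :
    (∀ x y : ℝ, wedge4 (U x) (U x) = wedge4 (U y) (U y)) ∧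
    (∀ x y : ℝ, wedge4 omega6 (U x) = wedge4 omega6 (U y)) ∧
    (∀ x₀ : ℝ, wedge4 (U x₀) (U x₀) = 0 → wedge4 omega6 (U x₀) = 0 →
      ∀ x : ℝ, wedge4 (U x) (U x) = 0 ∧ wedge4 omega6 (U x) = 0) := by
  have key := fun x => key_lemma (A x) (A2 x) (hsymm x) (hA2 x)
  have hUc : ∀ (x : ℝ) (i : Fin 6),
      HasDerivAt (fun t => U t i) ((A2 x).mulVec (U x) i) x := by
    intro x i
    have h : HasDerivAt U (deriv U x) x := (hU x).hasDerivAt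
    rw [hode x] at h
    exact hasDerivAt_pi.mp h i
  have Hg : ∀ x, HasDerivAt (fun t => wedge4 (U t) (U t)) 0 x := by
    intro x
    have h0 := hUc x 0; have h1 := hUc x 1; have h2 := hUc x 2
    have h3 := hUc x 3; have h4 := hUc x 4; have h5 := hUc x 5
    have H := (((((h0.mul h5).add (h5.mul h0)).sub (h1.mul h4)).sub
      (h4.mul h1)).add (h2.mul h3)).add (h3.mul h2)
    have key1 := (key x (U x)).1
    simp only [wedge4] at key1
    refine H.congr_deriv (Eq.symm ?_)
    linear_combination (-2 : ℝ) * key1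
  have Hh : ∀ x, HasDerivAt (fun t => wedge4 omega6 (U t)) 0 x := by
    intro x
    have h0 := hUc x 0; have h1 := hUc x 1; have h2 := hUc x 2
    have h3 := hUc x 3; have h4 := hUc x 4; have h5 := hUc x 5
    have H := (((((h5.const_mul (omega6 0)).add (h0.const_mul (omega6 5))).sub
      (h4.const_mul (omega6 1))).sub (h1.const_mul (omega6 4))).add
      (h3.const_mul (omega6 2))).add (h2.const_mul (omega6 3))
    have key2 := (key x (U x)).2
    refine H.congr_deriv (Eq.symm ?_)
    simp only [omega6, Matrix.cons_val_zero, Matrix.cons_val_one, Matrix.head_cons,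
      Matrix.cons_val_two, Matrix.cons_val_three, Matrix.cons_val_four, cons_val_five,
      Matrix.tail_cons]
    linear_combination key2
  have hg : ∀ x y : ℝ, wedge4 (U x) (U x) = wedge4 (U y) (U y) := fun x y =>
    is_const_of_deriv_eq_zero (fun t => (Hg t).differentiableAt)
      (fun t => (Hg t).deriv) x y
  have hh : ∀ x y : ℝ, wedge4 omega6 (U x) = wedge4 omega6 (U y) := fun x y =>
    is_const_of_deriv_eq_zero (fun t => (Hh t).differentiableAt)
      (fun t => (Hh t).deriv) x y
  exact ⟨hg, hh, fun x₀ e1 e2 x => ⟨(hg x x₀).trans e1, (hh x x₀).trans e2⟩⟩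
end

section
/- Let A : ℝ → Matrix (Fin 4) (Fin 4) ℝ be continuous with J·A(x) symmetric for every x, and let σ ∈ ℝ. If Û : ℝ → Λ²(ℝ⁴) is differentiable and satisfies the shifted induced equation Û'(x) = A(x)^(2) Û(x) − σ Û(x) for all x, then for all x ≥ x₀: Û(x)∧Û(x) = e^{−2σ(x−x₀)} · (Û(x₀)∧Û(x₀)) and ω∧Û(x) = e^{−σ(x−x₀)} · (ω∧Û(x₀)) in Λ⁴(ℝ⁴). In particular, if σ > 0 then the constraints Û∧Û = 0 and ω∧Û = 0 defining the Lagrangian Grassmannian are exponentially attracting for the shifted flow. -/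
open Matrix

def ee (i : Fin 4) : Fin 4 → ℝ := Pi.single i 1


lemma six0 (a b c d e f : ℝ) : ![a,b,c,d,e,f] (0:Fin 6) = a := rfl
lemma six1 (a b c d e f : ℝ) : ![a,b,c,d,e,f] (1:Fin 6) = b := rfl
lemma six2 (a b c d e f : ℝ) : ![a,b,c,d,e,f] (2:Fin 6) = c := rfl
lemma six3 (a b c d e f : ℝ) : ![a,b,c,d,e,f] (3:Fin 6) = d := rfl
lemma six4 (a b c d e f : ℝ) : ![a,b,c,d,e,f] (4:Fin 6) = e := rfl
lemma six5 (a b c d e f : ℝ) : ![a,b,c,d,e,f] (5:Fin 6) = f := rfl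

set_option maxHeartbeats 1000000 in
lemma key (A : Matrix (Fin 4) (Fin 4) ℝ) (hs : (J4 * A).IsSymm)
    (A2 : Matrix (Fin 6) (Fin 6) ℝ)
    (h : ∀ u v, A2.mulVec (plucker u v) = plucker (A.mulVec u) v + plucker u (A.mulVec v)) :
    (∀ U V : Fin 6 → ℝ, wedge4 (A2.mulVec U) V + wedge4 U (A2.mulVec V) = 0) ∧
    (∀ W : Fin 6 → ℝ, wedge4 omega6 (A2.mulVec W) = 0) := by
  have hrel : ∀ i j : Fin 4, (J4 * A) j i = (J4 * A) i j := fun i j => hs.apply i j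
  have r1 : A 0 0 = - A 2 2 := by
    have := hrel 0 2; simp [J4, Matrix.mul_apply, Fin.sum_univ_four] at this; linarith
  have r2 : A 1 1 = - A 3 3 := by
    have := hrel 1 3; simp [J4, Matrix.mul_apply, Fin.sum_univ_four] at this; linarith
  have r3 : A 3 0 = A 2 1 := by
    have := hrel 0 1; simp [J4, Matrix.mul_apply, Fin.sum_univ_four] at this; linarith
  have r4 : A 1 0 = - A 2 3 := by
    have := hrel 0 3; simp [J4, Matrix.mul_apply, Fin.sum_univ_four] at this; linarith
  have r5 : A 0 1 = - A 3 2 := by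
    have := hrel 1 2; simp [J4, Matrix.mul_apply, Fin.sum_univ_four] at this; linarith
  have r6 : A 0 3 = A 1 2 := by
    have := hrel 2 3; simp [J4, Matrix.mul_apply, Fin.sum_univ_four] at this; linarith
  have col : ∀ i, A.mulVec (ee i) = fun j => A j i := by
    intro i; funext j
    simp [Matrix.mulVec, dotProduct, ee, Fin.sum_univ_four, Pi.single_apply]
  have c01 : plucker (A.mulVec (ee 0)) (ee 1) + plucker (ee 0) (A.mulVec (ee 1))
      = ![A 0 0 + A 1 1, A 2 1, A 3 1, -A 2 0, -A 3 0, 0] := by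
    rw [col, col]; funext k
    fin_cases k <;> simp [plucker, ee, Pi.single_apply, six0, six1, six2, six3, six4, six5] <;> ring
  have c02 : plucker (A.mulVec (ee 0)) (ee 2) + plucker (ee 0) (A.mulVec (ee 2))
      = ![A 1 2, A 0 0 + A 2 2, A 3 2, A 1 0, 0, -A 3 0] := by
    rw [col, col]; funext k
    fin_cases k <;> simp [plucker, ee, Pi.single_apply, six0, six1, six2, six3, six4, six5] <;> ring
  have c03 : plucker (A.mulVec (ee 0)) (ee 3) + plucker (ee 0) (A.mulVec (ee 3))
      = ![A 1 3, A 2 3, A 0 0 + A 3 3, 0, A 1 0, A 2 0] := by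
    rw [col, col]; funext k
    fin_cases k <;> simp [plucker, ee, Pi.single_apply, six0, six1, six2, six3, six4, six5] <;> ring
  have c12 : plucker (A.mulVec (ee 1)) (ee 2) + plucker (ee 1) (A.mulVec (ee 2))
      = ![-A 0 2, A 0 1, 0, A 1 1 + A 2 2, A 3 2, -A 3 1] := by
    rw [col, col]; funext k
    fin_cases k <;> simp [plucker, ee, Pi.single_apply, six0, six1, six2, six3, six4, six5] <;> ring
  have c13 : plucker (A.mulVec (ee 1)) (ee 3) + plucker (ee 1) (A.mulVec (ee 3))
      = ![-A 0 3, 0, A 0 1, A 2 3, A 1 1 + A 3 3, A 2 1] := by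
    rw [col, col]; funext k
    fin_cases k <;> simp [plucker, ee, Pi.single_apply, six0, six1, six2, six3, six4, six5] <;> ring
  have c23 : plucker (A.mulVec (ee 2)) (ee 3) + plucker (ee 2) (A.mulVec (ee 3))
      = ![0, -A 0 3, A 0 2, -A 1 3, A 1 2, A 2 2 + A 3 3] := by
    rw [col, col]; funext k
    fin_cases k <;> simp [plucker, ee, Pi.single_apply, six0, six1, six2, six3, six4, six5] <;> ring
  have p01 : (Pi.single (0:Fin 6) (1:ℝ)) = plucker (ee 0) (ee 1) := by
    funext k; fin_cases k <;> simp [plucker, ee, Pi.single_apply, six0, six1, six2, six3, six4, six5]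
  have p02 : (Pi.single (1:Fin 6) (1:ℝ)) = plucker (ee 0) (ee 2) := by
    funext k; fin_cases k <;> simp [plucker, ee, Pi.single_apply, six0, six1, six2, six3, six4, six5]
  have p03 : (Pi.single (2:Fin 6) (1:ℝ)) = plucker (ee 0) (ee 3) := by
    funext k; fin_cases k <;> simp [plucker, ee, Pi.single_apply, six0, six1, six2, six3, six4, six5]
  have p12 : (Pi.single (3:Fin 6) (1:ℝ)) = plucker (ee 1) (ee 2) := by
    funext k; fin_cases k <;> simp [plucker, ee, Pi.single_apply, six0, six1, six2, six3, six4, six5]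
  have p13 : (Pi.single (4:Fin 6) (1:ℝ)) = plucker (ee 1) (ee 3) := by
    funext k; fin_cases k <;> simp [plucker, ee, Pi.single_apply, six0, six1, six2, six3, six4, six5]
  have p23 : (Pi.single (5:Fin 6) (1:ℝ)) = plucker (ee 2) (ee 3) := by
    funext k; fin_cases k <;> simp [plucker, ee, Pi.single_apply, six0, six1, six2, six3, six4, six5]
  have hmv : ∀ W : Fin 6 → ℝ, A2.mulVec W =
      W 0 • ![A 0 0 + A 1 1, A 2 1, A 3 1, -A 2 0, -A 3 0, 0] +
      W 1 • ![A 1 2, A 0 0 + A 2 2, A 3 2, A 1 0, 0, -A 3 0] +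
      W 2 • ![A 1 3, A 2 3, A 0 0 + A 3 3, 0, A 1 0, A 2 0] +
      W 3 • ![-A 0 2, A 0 1, 0, A 1 1 + A 2 2, A 3 2, -A 3 1] +
      W 4 • ![-A 0 3, 0, A 0 1, A 2 3, A 1 1 + A 3 3, A 2 1] +
      W 5 • ![0, -A 0 3, A 0 2, -A 1 3, A 1 2, A 2 2 + A 3 3] := by
    intro W
    have hd : W = W 0 • (Pi.single 0 1 : Fin 6 → ℝ) + W 1 • (Pi.single 1 1 : Fin 6 → ℝ) +
        W 2 • (Pi.single 2 1 : Fin 6 → ℝ) + W 3 • (Pi.single 3 1 : Fin 6 → ℝ) +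
        W 4 • (Pi.single 4 1 : Fin 6 → ℝ) + W 5 • (Pi.single 5 1 : Fin 6 → ℝ) := by
      funext k; fin_cases k <;> simp [Pi.single_apply]
    conv_lhs => rw [hd]
    rw [p01, p02, p03, p12, p13, p23]
    simp only [Matrix.mulVec_add, Matrix.mulVec_smul, h, c01, c02, c03, c12, c13, c23]
  constructor
  · intro U V
    rw [hmv U, hmv V]
    simp only [wedge4, Pi.add_apply, Pi.smul_apply, smul_eq_mul, six0, six1, six2, six3, six4, six5]
    simp only [r1, r2, r3, r4, r5, r6]
    ring
  · intro W
    rw [hmv W]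
    simp only [wedge4, omega6, Pi.add_apply, Pi.smul_apply, smul_eq_mul, six0, six1, six2, six3, six4, six5]
    simp only [r1, r2, r3, r4, r5, r6]
    ring

lemma expsol (c : ℝ) (f : ℝ → ℝ) (hf : ∀ x, HasDerivAt f (c * f x) x) (x₀ x : ℝ) :
    f x = Real.exp (c * (x - x₀)) * f x₀ := by
  have hconst : ∀ y z : ℝ, Real.exp (-c * y) * f y = Real.exp (-c * z) * f z := by
    have hdiff : Differentiable ℝ (fun t => Real.exp (-c * t) * f t) := by
      intro t
      exact (((hasDerivAt_id t).const_mul (-c)).exp.mul (hf t)).differentiableAt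
    have hderiv : ∀ t, deriv (fun t => Real.exp (-c * t) * f t) t = 0 := by
      intro t
      have h1 : HasDerivAt (fun t => Real.exp (-c * t) * f t)
          ((-c * Real.exp (-c * t)) * f t + Real.exp (-c * t) * (c * f t)) t := by
        have he : HasDerivAt (fun t => Real.exp (-c * t)) (Real.exp (-c * t) * -c) t := by
          have := ((hasDerivAt_id t).const_mul (-c)).exp
          simpa using this
        have := he.mul (hf t)
        exact this.congr_deriv (by ring)
      rw [h1.deriv]; ring
    exact fun y z => is_const_of_deriv_eq_zero hdiff hderiv y z
  have h := hconst x x₀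
  have hpos : Real.exp (-c * x) ≠ 0 := Real.exp_ne_zero _
  have : f x = Real.exp (c * x) * (Real.exp (-c * x₀) * f x₀) := by
    rw [← h]
    rw [← mul_assoc, ← Real.exp_add]
    simp
  rw [this, ← mul_assoc, ← Real.exp_add]
  ring_nf

lemma wedge4_symm (U V : Fin 6 → ℝ) : wedge4 U V = wedge4 V U := by
  simp [wedge4]; ring

lemma wedge4_sub_smul_left (P Q R : Fin 6 → ℝ) (σ : ℝ) :
    wedge4 (P - σ • Q) R = wedge4 P R - σ * wedge4 Q R := by
  simp [wedge4]; ring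

lemma wedge4_sub_smul_right (P Q R : Fin 6 → ℝ) (σ : ℝ) :
    wedge4 R (P - σ • Q) = wedge4 R P - σ * wedge4 R Q := by
  simp [wedge4]; ring


/-- For the shifted induced equation `Û' = A^(2)(x) Û − σ Û` on `Λ²(ℝ⁴)`, with
`J·A(x)` symmetric, one has `Û∧Û(x) = e^{-2σ(x-x₀)} Û∧Û(x₀)` and
`ω∧Û(x) = e^{-σ(x-x₀)} ω∧Û(x₀)` for `x ≥ x₀`: the Lagrangian Grassmannian
constraints are exponentially attracting when `σ > 0`. -/
theorem stmt4 (A : ℝ → Matrix (Fin 4) (Fin 4) ℝ) (hA : Continuous A)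
    (hsymm : ∀ x, (J4 * A x).IsSymm) (σ : ℝ)
    (A2 : ℝ → Matrix (Fin 6) (Fin 6) ℝ)
    (hA2 : ∀ (x : ℝ) (u v : Fin 4 → ℝ),
      (A2 x).mulVec (plucker u v)
        = plucker ((A x).mulVec u) v + plucker u ((A x).mulVec v))
    (Uh : ℝ → Fin 6 → ℝ) (hU : Differentiable ℝ Uh)
    (hode : ∀ x, deriv Uh x = (A2 x).mulVec (Uh x) - σ • Uh x) :
    ∀ x₀ x : ℝ, x₀ ≤ x →
      wedge4 (Uh x) (Uh x) = Real.exp (-2 * σ * (x - x₀)) * wedge4 (Uh x₀) (Uh x₀) ∧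
      wedge4 omega6 (Uh x) = Real.exp (-σ * (x - x₀)) * wedge4 omega6 (Uh x₀) := by

  intro x₀ x _
  have hkey := fun x => key (A x) (hsymm x) (A2 x) (hA2 x)
  -- component derivatives
  have hcomp : ∀ (i : Fin 6) (x : ℝ), HasDerivAt (fun t => Uh t i) (deriv Uh x i) x := by
    intro i x
    have h := (hU x).hasDerivAt
    exact (ContinuousLinearMap.proj (R := ℝ) (φ := fun _ : Fin 6 => ℝ) i).hasFDerivAt.comp_hasDerivAt x h
  have base : ∀ (i j : Fin 6) (x : ℝ), HasDerivAt (fun t => Uh t i * Uh t j)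
      (deriv Uh x i * Uh x j + Uh x i * deriv Uh x j) x :=
    fun i j x => (hcomp i x).mul (hcomp j x)
  -- derivative of f
  have hf : ∀ y, HasDerivAt (fun t => wedge4 (Uh t) (Uh t))
      ((-2 * σ) * wedge4 (Uh y) (Uh y)) y := by
    intro y
    have h0 := ((((((base 0 5 y).add (base 5 0 y)).sub (base 1 4 y)).sub (base 4 1 y)).add
        (base 2 3 y)).add (base 3 2 y))
    have heq : (fun t => wedge4 (Uh t) (Uh t)) = fun t =>
        Uh t 0 * Uh t 5 + Uh t 5 * Uh t 0 - Uh t 1 * Uh t 4 - Uh t 4 * Uh t 1 +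
        Uh t 2 * Uh t 3 + Uh t 3 * Uh t 2 := by
      funext t; simp [wedge4]
    rw [heq]
    refine h0.congr_deriv ?_
    have : wedge4 (deriv Uh y) (Uh y) + wedge4 (Uh y) (deriv Uh y)
        = (-2 * σ) * wedge4 (Uh y) (Uh y) := by
      rw [hode y, wedge4_sub_smul_left, wedge4_sub_smul_right]
      have hz := (hkey y).1 (Uh y) (Uh y)
      ring_nf
      ring_nf at hz
      linarith
    rw [← this]
    simp [wedge4]; ring
  have hg : ∀ y, HasDerivAt (fun t => wedge4 omega6 (Uh t))
      ((-σ) * wedge4 omega6 (Uh y)) y := by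
    intro y
    have h0 := ((((((base 0 5 y).add (base 5 0 y)).sub (base 1 4 y)).sub (base 4 1 y)).add
        (base 2 3 y)).add (base 3 2 y))
    have heq : (fun t => wedge4 omega6 (Uh t)) = fun t => -(Uh t 1) - Uh t 4 := by
      funext t; simp [wedge4, omega6, six0, six1, six2, six3, six4, six5]; ring
    rw [heq]
    have h1 := ((hcomp 1 y).neg).sub (hcomp 4 y)
    refine h1.congr_deriv ?_
    have : wedge4 omega6 (deriv Uh y) = (-σ) * wedge4 omega6 (Uh y) := by
      rw [hode y, wedge4_sub_smul_right]
      have hz := (hkey y).2 ((A2 y).mulVec (Uh y))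
      -- wedge4 omega6 (A2 (Uh y)) = 0
      have hz2 := (hkey y).2 (Uh y)
      rw [hz2]; ring
    have hexp : wedge4 omega6 (deriv Uh y) = -(deriv Uh y 1) - deriv Uh y 4 := by
      simp [wedge4, omega6, six0, six1, six2, six3, six4, six5]; ring
    rw [← this, hexp]
  constructor
  · exact expsol (-2 * σ) _ hf x₀ x
  · exact expsol (-σ) _ hg x₀ x
end

section
/- Let U₁, U₂, U₃, U₄, U₅, U₆ be real numbers satisfying the Lagrangian-Grassmannian constraints U₂ + U₅ = 0 and U₁U₆ − U₂U₅ + U₃U₄ = 0, and suppose the complex number U₁ + iU₃ − iU₄ − U₆ is nonzero. Set T = 2(U₁ + U₆)/(U₁ + iU₃ − iU₄ − U₆) and Δ = (U₁ − iU₃ + iU₄ − U₆)/(U₁ + iU₃ − iU₄ − U₆). Then the two complex numbers μ± = (U₁ + U₆ ± i·√(4U₅² + (U₃ + U₄)²)) / (U₁ + iU₃ − iU₄ − U₆) are the roots of the quadratic μ² − T·μ + Δ = 0; i.e., each μ± satisfies μ±² − T·μ± + Δ = 0. -/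
/-- Under the Lagrangian-Grassmannian constraints `U₂ + U₅ = 0` and
`U₁U₆ − U₂U₅ + U₃U₄ = 0`, the two numbers
`μ± = (U₁ + U₆ ± i√(4U₅² + (U₃+U₄)²)) / (U₁ + iU₃ − iU₄ − U₆)`
are roots of `μ² − Tμ + Δ = 0` where `T = 2(U₁+U₆)/(U₁+iU₃−iU₄−U₆)` and
`Δ = (U₁−iU₃+iU₄−U₆)/(U₁+iU₃−iU₄−U₆)`. The sign `±` is encoded by `ε = ±1`. -/
theorem stmt7 (U1 U2 U3 U4 U5 U6 : ℝ)
    (hlag1 : U2 + U5 = 0) (hlag2 : U1 * U6 - U2 * U5 + U3 * U4 = 0)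
    (hne : (U1 : ℂ) + Complex.I * (U3 : ℂ) - Complex.I * (U4 : ℂ) - (U6 : ℂ) ≠ 0)
    (ε : ℝ) (hε : ε = 1 ∨ ε = -1) :
    (((U1 : ℂ) + (U6 : ℂ)
        + (ε : ℂ) * Complex.I * ((Real.sqrt (4 * U5 ^ 2 + (U3 + U4) ^ 2) : ℝ) : ℂ)) /
      ((U1 : ℂ) + Complex.I * (U3 : ℂ) - Complex.I * (U4 : ℂ) - (U6 : ℂ))) ^ 2
    - (2 * ((U1 : ℂ) + (U6 : ℂ)) /
        ((U1 : ℂ) + Complex.I * (U3 : ℂ) - Complex.I * (U4 : ℂ) - (U6 : ℂ))) *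
      (((U1 : ℂ) + (U6 : ℂ)
          + (ε : ℂ) * Complex.I * ((Real.sqrt (4 * U5 ^ 2 + (U3 + U4) ^ 2) : ℝ) : ℂ)) /
        ((U1 : ℂ) + Complex.I * (U3 : ℂ) - Complex.I * (U4 : ℂ) - (U6 : ℂ)))
    + ((U1 : ℂ) - Complex.I * (U3 : ℂ) + Complex.I * (U4 : ℂ) - (U6 : ℂ)) /
        ((U1 : ℂ) + Complex.I * (U3 : ℂ) - Complex.I * (U4 : ℂ) - (U6 : ℂ))
    = 0 := by
  set S : ℂ := ((Real.sqrt (4 * U5 ^ 2 + (U3 + U4) ^ 2) : ℝ) : ℂ) with hS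
  set D : ℂ := (U1 : ℂ) + Complex.I * (U3 : ℂ) - Complex.I * (U4 : ℂ) - (U6 : ℂ) with hD
  have hs : S ^ 2 = 4 * (U5:ℂ) ^ 2 + ((U3:ℂ) + U4) ^ 2 := by
    rw [hS, ← Complex.ofReal_pow, Real.sq_sqrt (by positivity)]
    push_cast; ring
  have hε2 : (ε : ℂ) ^ 2 = 1 := by
    rcases hε with h | h <;> rw [h] <;> norm_num
  have h1c : (U2 : ℂ) + U5 = 0 := by exact_mod_cast hlag1
  have h3 : (U1:ℂ) * U6 - (U2:ℂ) * U5 + (U3:ℂ) * U4 = 0 := by exact_mod_cast hlag2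
  have key : ((U1:ℂ) + U6 + (ε:ℂ) * Complex.I * S) ^ 2
      - 2 * ((U1:ℂ) + U6) * ((U1:ℂ) + U6 + (ε:ℂ) * Complex.I * S)
      + ((U1:ℂ) - Complex.I * U3 + Complex.I * U4 - U6) * D = 0 := by
    rw [hD]
    linear_combination (Complex.I ^ 2 * S ^ 2) * hε2
      + (S ^ 2 - ((U3:ℂ) - U4) ^ 2) * Complex.I_sq
      + (-1 : ℂ) * hs + (-4 : ℂ) * h3 + (-4 * (U5:ℂ)) * h1c
  have hD2 : D ^ 2 ≠ 0 := pow_ne_zero 2 hne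
  have expand : (((U1:ℂ) + U6 + (ε:ℂ) * Complex.I * S) / D) ^ 2
      - 2 * ((U1:ℂ) + U6) / D * (((U1:ℂ) + U6 + (ε:ℂ) * Complex.I * S) / D)
      + ((U1:ℂ) - Complex.I * U3 + Complex.I * U4 - U6) / D
      = (((U1:ℂ) + U6 + (ε:ℂ) * Complex.I * S) ^ 2
          - 2 * ((U1:ℂ) + U6) * ((U1:ℂ) + U6 + (ε:ℂ) * Complex.I * S)
          + ((U1:ℂ) - Complex.I * U3 + Complex.I * U4 - U6) * D) / D ^ 2 := by
    field_simp
  rw [expand, key, zero_div]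
end

section
/- Let B be a real symmetric 4×4 matrix, let J be the standard 4×4 symplectic matrix, let ν, τ ∈ ℝ with ν ≠ 0, and let ξ₁, ξ₂ ∈ ℝ⁴ satisfy B ξ₁ = ν J ξ₁ − τ J ξ₂ and B ξ₂ = ν J ξ₂ + τ J ξ₁ (i.e., ξ₁ + iξ₂ is an eigenvector of J⁻¹B with eigenvalue ν + iτ). Then ⟨J ξ₁, ξ₂⟩ = 0; that is, the real span of ξ₁ and ξ₂ is a Lagrangian subspace of ℝ⁴. -/
open Matrix

/-- If `B` is symmetric, `ν ≠ 0`, and `ξ₁ + iξ₂` is an eigenvector of `J⁻¹B` with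
eigenvalue `ν + iτ` (i.e. `Bξ₁ = νJξ₁ − τJξ₂` and `Bξ₂ = νJξ₂ + τJξ₁`), then
`⟨Jξ₁, ξ₂⟩ = 0`: the real span of `ξ₁, ξ₂` is a Lagrangian subspace. -/
theorem stmt8 (B : Matrix (Fin 4) (Fin 4) ℝ) (hB : B.IsSymm)
    (ν τ : ℝ) (hν : ν ≠ 0) (ξ₁ ξ₂ : Fin 4 → ℝ)
    (h1 : B.mulVec ξ₁ = ν • J4.mulVec ξ₁ - τ • J4.mulVec ξ₂)
    (h2 : B.mulVec ξ₂ = ν • J4.mulVec ξ₂ + τ • J4.mulVec ξ₁) :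
    J4.mulVec ξ₁ ⬝ᵥ ξ₂ = 0 := by
  have hsym : B.mulVec ξ₁ ⬝ᵥ ξ₂ = ξ₁ ⬝ᵥ B.mulVec ξ₂ := by
    rw [dotProduct_mulVec, ← mulVec_transpose, hB.eq, dotProduct_comm]
  have a1 : J4.mulVec ξ₂ ⬝ᵥ ξ₂ = 0 := by
    simp [J4, mulVec, dotProduct, Fin.sum_univ_four, Matrix.vecHead, Matrix.vecTail]; ring
  have a2 : ξ₁ ⬝ᵥ J4.mulVec ξ₁ = 0 := by
    simp [J4, mulVec, dotProduct, Fin.sum_univ_four, Matrix.vecHead, Matrix.vecTail]; ring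
  have a3 : ξ₁ ⬝ᵥ J4.mulVec ξ₂ = - (J4.mulVec ξ₁ ⬝ᵥ ξ₂) := by
    simp [J4, mulVec, dotProduct, Fin.sum_univ_four, Matrix.vecHead, Matrix.vecTail]; ring
  rw [h1] at hsym
  rw [h2] at hsym
  simp only [sub_dotProduct, add_dotProduct, smul_dotProduct, dotProduct_add,
    dotProduct_smul, smul_eq_mul, a1, a2, a3] at hsym
  have : (2 * ν) * (J4.mulVec ξ₁ ⬝ᵥ ξ₂) = 0 := by linarith
  rcases mul_eq_zero.mp this with h | h
  · exact absurd (by linarith : ν = 0) hν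
  · exact h
end

section
/- Let κ > 0 and define a₀ = (√κ/15)(4 − κ), a₁ = (2κ − 3)/5, a₂ = −√κ. Then each of the two functions φ^±(x) = e^{±√κ x}(±a₀ + a₁ tanh x ± a₂ tanh²x + tanh³x) is a solution of the second-order ODE φ''(x) + 12 sech²(x) φ(x) = κ φ(x) for all x ∈ ℝ. -/
/-- The explicit functions `φ^± (ε = ±1)` for the `12 sech²` spectral problem:
`φ^ε(x) = e^{ε√κ x}(ε a₀ + a₁ tanh x + ε a₂ tanh²x + tanh³x)` with
`a₀ = (√κ/15)(4−κ)`, `a₁ = (2κ−3)/5`, `a₂ = −√κ`. -/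
noncomputable def phiPM (κ ε x : ℝ) : ℝ :=
  Real.exp (ε * Real.sqrt κ * x) *
    (ε * (Real.sqrt κ / 15 * (4 - κ)) + (2 * κ - 3) / 5 * Real.tanh x
      + ε * (-Real.sqrt κ) * (Real.tanh x) ^ 2 + (Real.tanh x) ^ 3)

lemma hasDerivAt_tanh' (x : ℝ) : HasDerivAt Real.tanh (1 - Real.tanh x ^ 2) x := by
  have hc : Real.cosh x ≠ 0 := (Real.cosh_pos x).ne'
  have h := (Real.hasDerivAt_sinh x).div (Real.hasDerivAt_cosh x) hc
  have hfun : Real.tanh = fun y => Real.sinh y / Real.cosh y :=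
    funext fun y => Real.tanh_eq_sinh_div_cosh y
  rw [hfun]
  have hsq : Real.cosh x ^ 2 - Real.sinh x ^ 2 = 1 := Real.cosh_sq_sub_sinh_sq x
  refine h.congr_deriv ?_
  field_simp

lemma sech_sq (x : ℝ) : (1 / Real.cosh x) ^ 2 = 1 - Real.tanh x ^ 2 := by
  have hc : Real.cosh x ≠ 0 := (Real.cosh_pos x).ne'
  have hsq : Real.cosh x ^ 2 - Real.sinh x ^ 2 = 1 := Real.cosh_sq_sub_sinh_sq x
  rw [Real.tanh_eq_sinh_div_cosh]
  field_simp
  linarith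

/-- derivative of `phiPM` -/
noncomputable def phiD (κ ε x : ℝ) : ℝ :=
  Real.exp (ε * Real.sqrt κ * x) *
    (ε * Real.sqrt κ *
      (ε * (Real.sqrt κ / 15 * (4 - κ)) + (2 * κ - 3) / 5 * Real.tanh x
        + ε * (-Real.sqrt κ) * (Real.tanh x) ^ 2 + (Real.tanh x) ^ 3)
     + ((2 * κ - 3) / 5 + 2 * (ε * (-Real.sqrt κ)) * Real.tanh x + 3 * (Real.tanh x) ^ 2)
        * (1 - (Real.tanh x) ^ 2))

lemma hasDerivAt_phiPM (κ ε x : ℝ) : HasDerivAt (phiPM κ ε) (phiD κ ε x) x := by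
  have ht := hasDerivAt_tanh' x
  have hexp : HasDerivAt (fun y : ℝ => Real.exp (ε * Real.sqrt κ * y))
      (Real.exp (ε * Real.sqrt κ * x) * (ε * Real.sqrt κ)) x := by
    simpa [mul_comm] using (((hasDerivAt_id x).const_mul (ε * Real.sqrt κ)).exp)
  have hP : HasDerivAt (fun y : ℝ =>
      ε * (Real.sqrt κ / 15 * (4 - κ)) + (2 * κ - 3) / 5 * Real.tanh y
        + ε * (-Real.sqrt κ) * (Real.tanh y) ^ 2 + (Real.tanh y) ^ 3)
      ((2 * κ - 3) / 5 * (1 - Real.tanh x ^ 2)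
        + ε * (-Real.sqrt κ) * (2 * Real.tanh x * (1 - Real.tanh x ^ 2))
        + 3 * Real.tanh x ^ 2 * (1 - Real.tanh x ^ 2)) x := by
    have h1 := (ht.const_mul ((2 * κ - 3) / 5)).const_add (ε * (Real.sqrt κ / 15 * (4 - κ)))
    have h2 := (ht.pow 2).const_mul (ε * (-Real.sqrt κ))
    have h3 := ht.pow 3
    exact ((h1.add h2).add h3).congr_deriv (by ring)
  have := hexp.mul hP
  unfold phiPM phiD
  exact this.congr_deriv (by ring)

lemma hasDerivAt_phiD (κ ε x : ℝ) : HasDerivAt (phiD κ ε)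
    (Real.exp (ε * Real.sqrt κ * x) *
      ((ε * Real.sqrt κ) ^ 2 *
        (ε * (Real.sqrt κ / 15 * (4 - κ)) + (2 * κ - 3) / 5 * Real.tanh x
          + ε * (-Real.sqrt κ) * (Real.tanh x) ^ 2 + (Real.tanh x) ^ 3)
       + 2 * (ε * Real.sqrt κ) *
          ((2 * κ - 3) / 5 + 2 * (ε * (-Real.sqrt κ)) * Real.tanh x + 3 * (Real.tanh x) ^ 2)
          * (1 - (Real.tanh x) ^ 2)
       + (2 * (ε * (-Real.sqrt κ)) + 6 * Real.tanh x) * (1 - (Real.tanh x) ^ 2) ^ 2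
       - 2 * Real.tanh x *
          ((2 * κ - 3) / 5 + 2 * (ε * (-Real.sqrt κ)) * Real.tanh x + 3 * (Real.tanh x) ^ 2)
          * (1 - (Real.tanh x) ^ 2))) x := by
  have ht := hasDerivAt_tanh' x
  have hexp : HasDerivAt (fun y : ℝ => Real.exp (ε * Real.sqrt κ * y))
      (Real.exp (ε * Real.sqrt κ * x) * (ε * Real.sqrt κ)) x := by
    simpa [mul_comm] using (((hasDerivAt_id x).const_mul (ε * Real.sqrt κ)).exp)
  have hP : HasDerivAt (fun y : ℝ =>
      ε * (Real.sqrt κ / 15 * (4 - κ)) + (2 * κ - 3) / 5 * Real.tanh y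
        + ε * (-Real.sqrt κ) * (Real.tanh y) ^ 2 + (Real.tanh y) ^ 3)
      ((2 * κ - 3) / 5 * (1 - Real.tanh x ^ 2)
        + ε * (-Real.sqrt κ) * (2 * Real.tanh x * (1 - Real.tanh x ^ 2))
        + 3 * Real.tanh x ^ 2 * (1 - Real.tanh x ^ 2)) x := by
    have h1 := (ht.const_mul ((2 * κ - 3) / 5)).const_add (ε * (Real.sqrt κ / 15 * (4 - κ)))
    have h2 := (ht.pow 2).const_mul (ε * (-Real.sqrt κ))
    have h3 := ht.pow 3
    exact ((h1.add h2).add h3).congr_deriv (by ring)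
  -- Q = (2κ-3)/5 + 2ε(-√κ) t + 3 t²
  have hQ : HasDerivAt (fun y : ℝ =>
      (2 * κ - 3) / 5 + 2 * (ε * (-Real.sqrt κ)) * Real.tanh y + 3 * (Real.tanh y) ^ 2)
      (2 * (ε * (-Real.sqrt κ)) * (1 - Real.tanh x ^ 2)
        + 3 * (2 * Real.tanh x * (1 - Real.tanh x ^ 2))) x := by
    have h1 := (ht.const_mul (2 * (ε * (-Real.sqrt κ)))).const_add ((2 * κ - 3) / 5)
    have h2 := (ht.pow 2).const_mul 3
    exact (h1.add h2).congr_deriv (by ring)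
  have hR : HasDerivAt (fun y : ℝ => 1 - (Real.tanh y) ^ 2)
      (-(2 * Real.tanh x * (1 - Real.tanh x ^ 2))) x := by
    have := (ht.pow 2).const_sub 1
    exact this.congr_deriv (by ring)
  have hInner := (hP.const_mul (ε * Real.sqrt κ)).add (hQ.mul hR)
  have := hexp.mul hInner
  unfold phiD
  exact this.congr_deriv (by simp only [Pi.add_apply, Pi.mul_apply]; ring)

/-- For `κ > 0`, each of the functions `φ^±` solves the ODE
`φ'' + 12 sech²x · φ = κ φ` on all of `ℝ`. -/
theorem stmt11 (κ : ℝ) (hκ : 0 < κ) (ε : ℝ) (hε : ε = 1 ∨ ε = -1) (x : ℝ) :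
    deriv (deriv (phiPM κ ε)) x + 12 * (1 / Real.cosh x) ^ 2 * phiPM κ ε x
      = κ * phiPM κ ε x := by
  have hd1 : deriv (phiPM κ ε) = phiD κ ε :=
    funext fun y => (hasDerivAt_phiPM κ ε y).deriv
  rw [hd1, (hasDerivAt_phiD κ ε x).deriv, sech_sq]
  have hs : Real.sqrt κ ^ 2 = κ := Real.sq_sqrt hκ.le
  unfold phiPM
  set s := Real.sqrt κ with hsdef
  rw [← hs]
  rcases hε with h | h <;> subst h <;> ring
end

section
/- Let κ > 0, let a₀ = (√κ/15)(4 − κ), a₁ = (2κ − 3)/5, a₂ = −√κ, and define φ^±(x) = e^{±√κ x}(±a₀ + a₁ tanh x ± a₂ tanh²x + tanh³x). Then the Wronskian W(x) = φ⁺(x)·(φ⁻)'(x) − (φ⁺)'(x)·φ⁻(x) is independent of x and equals W = 2a₀(a₁ + a₀√κ) = (2/225)·√κ·(κ − 1)(κ − 4)(κ − 9). Consequently, φ⁺ and φ⁻ are linearly independent for every κ ∈ (0, ∞) \ {1, 4, 9}. -/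
lemma hasDerivAt_phiPM_s12 (κ ε x : ℝ) :
    HasDerivAt (phiPM κ ε)
      (ε * Real.sqrt κ * Real.exp (ε * Real.sqrt κ * x) *
        (ε * (Real.sqrt κ / 15 * (4 - κ)) + (2 * κ - 3) / 5 * Real.tanh x
          + ε * (-Real.sqrt κ) * Real.tanh x ^ 2 + Real.tanh x ^ 3)
       + Real.exp (ε * Real.sqrt κ * x) *
        (((2 * κ - 3) / 5 + ε * (-Real.sqrt κ) * (2 * Real.tanh x)
          + 3 * Real.tanh x ^ 2) * (1 - Real.tanh x ^ 2))) x := by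
  have ht := hasDerivAt_tanh' x
  have he : HasDerivAt (fun y => Real.exp (ε * Real.sqrt κ * y))
      (Real.exp (ε * Real.sqrt κ * x) * (ε * Real.sqrt κ)) x := by
    simpa using ((hasDerivAt_id x).const_mul (ε * Real.sqrt κ)).exp
  have hp := (((hasDerivAt_const x (ε * (Real.sqrt κ / 15 * (4 - κ)))).add
      (ht.const_mul ((2 * κ - 3) / 5))).add
      ((ht.pow 2).const_mul (ε * (-Real.sqrt κ)))).add (ht.pow 3)
  have h := he.mul hp
  refine h.congr_deriv ?_
  simp only [Pi.add_apply, Pi.pow_apply]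
  push_cast
  ring

/-- For `κ > 0`, the Wronskian `W = φ⁺(φ⁻)' − (φ⁺)'φ⁻` is independent of `x` and
equals `2a₀(a₁ + a₀√κ) = (2/225)√κ(κ−1)(κ−4)(κ−9)`; consequently `φ⁺, φ⁻` are
linearly independent for `κ ∈ (0,∞) \ {1,4,9}`. -/
theorem stmt12 (κ : ℝ) (hκ : 0 < κ) :
    (∀ x : ℝ,
      phiPM κ 1 x * deriv (phiPM κ (-1)) x - deriv (phiPM κ 1) x * phiPM κ (-1) x
        = 2 * (Real.sqrt κ / 15 * (4 - κ)) *
            ((2 * κ - 3) / 5 + (Real.sqrt κ / 15 * (4 - κ)) * Real.sqrt κ)) ∧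
    (2 * (Real.sqrt κ / 15 * (4 - κ)) *
        ((2 * κ - 3) / 5 + (Real.sqrt κ / 15 * (4 - κ)) * Real.sqrt κ)
      = 2 / 225 * Real.sqrt κ * (κ - 1) * (κ - 4) * (κ - 9)) ∧
    (κ ≠ 1 → κ ≠ 4 → κ ≠ 9 →
      ∀ c₁ c₂ : ℝ, (∀ x : ℝ, c₁ * phiPM κ 1 x + c₂ * phiPM κ (-1) x = 0) →
        c₁ = 0 ∧ c₂ = 0) := by
  have hs : Real.sqrt κ ^ 2 = κ := Real.sq_sqrt hκ.le
  have part1 : ∀ x : ℝ,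
      phiPM κ 1 x * deriv (phiPM κ (-1)) x - deriv (phiPM κ 1) x * phiPM κ (-1) x
        = 2 * (Real.sqrt κ / 15 * (4 - κ)) *
            ((2 * κ - 3) / 5 + (Real.sqrt κ / 15 * (4 - κ)) * Real.sqrt κ) := by
    intro x
    rw [(hasDerivAt_phiPM_s12 κ 1 x).deriv, (hasDerivAt_phiPM_s12 κ (-1) x).deriv]
    simp only [phiPM]
    set s := Real.sqrt κ with hsdef
    set t := Real.tanh x with htdef
    have hE : Real.exp ((1:ℝ) * s * x) * Real.exp ((-1:ℝ) * s * x) = 1 := by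
      rw [← Real.exp_add]; ring_nf; exact Real.exp_zero
    rw [← hs]
    set E1 := Real.exp ((1:ℝ) * s * x)
    set E2 := Real.exp ((-1:ℝ) * s * x)
    linear_combination (2 * (s / 15 * (4 - s ^ 2)) *
      ((2 * s ^ 2 - 3) / 5 + (s / 15 * (4 - s ^ 2)) * s)) * hE
  have part2 : 2 * (Real.sqrt κ / 15 * (4 - κ)) *
        ((2 * κ - 3) / 5 + (Real.sqrt κ / 15 * (4 - κ)) * Real.sqrt κ)
      = 2 / 225 * Real.sqrt κ * (κ - 1) * (κ - 4) * (κ - 9) := by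
    linear_combination (2 * Real.sqrt κ * (4 - κ) ^ 2 / 225) * hs
  refine ⟨part1, part2, ?_⟩
  intro h1 h4 h9 c₁ c₂ h
  set W := 2 * (Real.sqrt κ / 15 * (4 - κ)) *
      ((2 * κ - 3) / 5 + (Real.sqrt κ / 15 * (4 - κ)) * Real.sqrt κ) with hWdef
  have hWne : W ≠ 0 := by
    rw [part2]
    have : Real.sqrt κ ≠ 0 := ne_of_gt (Real.sqrt_pos.mpr hκ)
    exact mul_ne_zero (mul_ne_zero (mul_ne_zero (mul_ne_zero (by norm_num) this)
      (sub_ne_zero.mpr h1)) (sub_ne_zero.mpr h4)) (sub_ne_zero.mpr h9)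
  have hd1 := hasDerivAt_phiPM_s12 κ 1 0
  have hd2 := hasDerivAt_phiPM_s12 κ (-1) 0
  have hd := (hd1.const_mul c₁).add (hd2.const_mul c₂)
  have hfun : ((fun y => c₁ * phiPM κ 1 y) + fun y => c₂ * phiPM κ (-1) y) = fun _ => (0:ℝ) :=
    funext h
  rw [hfun] at hd
  have e2 : c₁ * deriv (phiPM κ 1) 0 + c₂ * deriv (phiPM κ (-1)) 0 = 0 := by
    rw [hd1.deriv, hd2.deriv]
    exact hd.unique (hasDerivAt_const 0 0)
  have e1 := h 0
  have hW0 : phiPM κ 1 0 * deriv (phiPM κ (-1)) 0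
      - deriv (phiPM κ 1) 0 * phiPM κ (-1) 0 = W := part1 0
  constructor
  · have hc : c₁ * W = 0 := by
      linear_combination deriv (phiPM κ (-1)) 0 * e1 - phiPM κ (-1) 0 * e2 - c₁ * hW0
    exact (mul_eq_zero.mp hc).resolve_right hWne
  · have hc : c₂ * W = 0 := by
      linear_combination phiPM κ 1 0 * e2 - deriv (phiPM κ 1) 0 * e1 - c₂ * hW0
    exact (mul_eq_zero.mp hc).resolve_right hWne
end

section
/- Let P, c ∈ ℝ and let q ≥ 1 be a natural number. Let φ : ℝ → ℝ be a smooth solution of φ'''' − P φ'' + c φ − φ^{q+1} = 0 such that φ, φ', φ'', φ''' tend to 0 at ±∞ and such that the functions φ^{q+2}, (φ + φ'')², φ'², φ''², φφ'', φφ'''' are integrable on ℝ (with exponential decay of φ and its derivatives). Then ∫_ℝ φ^{q+2} dx = ∫_ℝ c(φ + φ'')² dx + (P + 2c)∫_ℝ (φ')² dx + (1 − c)∫_ℝ (φ'')² dx. Moreover, if either (P + 2c ≥ 0 and 0 < c ≤ 1) or (P > 0 and c > 0), and φ is not identically zero, then ∫_ℝ φ^{q+2} dx > 0. -/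
open MeasureTheory Filter

/-- For a smooth solitary-wave solution `φ` of the steady fifth-order KdV equation
`φ'''' − Pφ'' + cφ − φ^{q+1} = 0` decaying (with derivatives up to order 3) at `±∞`,
one has `∫φ^{q+2} = ∫c(φ+φ'')² + (P+2c)∫φ'² + (1−c)∫φ''²`; moreover, under the
parameter hypotheses `(P+2c ≥ 0 and 0 < c ≤ 1)` or `(P > 0 and c > 0)` and `φ ≠ 0`,
`∫φ^{q+2} > 0`. -/
theorem stmt16 (P c : ℝ) (q : ℕ) (hq : 1 ≤ q) (φ : ℝ → ℝ)
    (hφ : ContDiff ℝ (⊤ : ℕ∞) φ)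
    (hode : ∀ x : ℝ,
      deriv^[4] φ x - P * deriv^[2] φ x + c * φ x - φ x ^ (q + 1) = 0)
    (hdecay : ∀ k : ℕ, k ≤ 3 →
      Tendsto (deriv^[k] φ) atTop (nhds 0) ∧ Tendsto (deriv^[k] φ) atBot (nhds 0))
    (hint1 : Integrable (fun x => φ x ^ (q + 2)))
    (hint2 : Integrable (fun x => (φ x + deriv^[2] φ x) ^ 2))
    (hint3 : Integrable (fun x => (deriv φ x) ^ 2))
    (hint4 : Integrable (fun x => (deriv^[2] φ x) ^ 2))
    (hint5 : Integrable (fun x => φ x * deriv^[2] φ x))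
    (hint6 : Integrable (fun x => φ x * deriv^[4] φ x)) :
    (∫ x : ℝ, φ x ^ (q + 2))
      = (∫ x : ℝ, c * (φ x + deriv^[2] φ x) ^ 2)
        + (P + 2 * c) * (∫ x : ℝ, (deriv φ x) ^ 2)
        + (1 - c) * (∫ x : ℝ, (deriv^[2] φ x) ^ 2) ∧
    (((0 ≤ P + 2 * c ∧ 0 < c ∧ c ≤ 1) ∨ (0 < P ∧ 0 < c)) → φ ≠ 0 →
      0 < ∫ x : ℝ, φ x ^ (q + 2)) := by
  -- smoothness of all iterated derivatives
  have hφ' : ContDiff ℝ (⊤ : ℕ∞) φ := hφ.of_le (by simp)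
  have hsm : ∀ n : ℕ, ContDiff ℝ (⊤ : ℕ∞) (deriv^[n] φ) := fun n => hφ'.iterate_deriv n
  have hd : ∀ (n : ℕ) (x : ℝ), HasDerivAt (deriv^[n] φ) (deriv^[n + 1] φ x) x := by
    intro n x
    have h1 : deriv^[n + 1] φ = deriv (deriv^[n] φ) := Function.iterate_succ_apply' deriv n φ
    rw [h1]
    exact (((hsm n).differentiable (by simp)) x).hasDerivAt
  -- decay facts
  have e1 : deriv^[1] φ = deriv φ := rfl
  have e2 : deriv^[2] φ = deriv (deriv φ) := rfl
  have e3 : deriv^[3] φ = deriv (deriv (deriv φ)) := rfl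
  have e4 : deriv^[4] φ = deriv (deriv (deriv (deriv φ))) := rfl
  have h0t := (hdecay 0 (by norm_num)).1
  have h0b := (hdecay 0 (by norm_num)).2
  have h1t := (hdecay 1 (by norm_num)).1
  have h1b := (hdecay 1 (by norm_num)).2
  have h2t := (hdecay 2 (by norm_num)).1
  have h2b := (hdecay 2 (by norm_num)).2
  have h3t := (hdecay 3 (by norm_num)).1
  have h3b := (hdecay 3 (by norm_num)).2
  simp only [Function.iterate_zero, id] at h0t h0b
  -- φ² is integrable
  have hφ2 : Integrable (fun x => φ x ^ 2) := by
    have : (fun x => φ x ^ 2) = fun x =>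
        (φ x + deriv^[2] φ x) ^ 2 - 2 * (φ x * deriv^[2] φ x) - (deriv^[2] φ x) ^ 2 := by
      funext x; ring
    rw [this]
    exact (hint2.sub (hint5.const_mul 2)).sub hint4
  -- IBP 1 : ∫ φ φ'' = - ∫ φ'²
  have ibp1 : (∫ x : ℝ, φ x * deriv^[2] φ x) = - ∫ x : ℝ, (deriv φ x) ^ 2 := by
    have key : (∫ x : ℝ, (deriv φ x) ^ 2 + φ x * deriv^[2] φ x) = 0 - 0 := by
      apply integral_of_hasDerivAt_of_tendsto (f := fun x => φ x * deriv φ x)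
      · intro x
        have h := (hd 0 x).mul (hd 1 x)
        exact h.congr_deriv
          (by simp only [Nat.reduceAdd, e1, e2, Function.iterate_zero, id_eq]; ring)
      · exact hint3.add hint5
      · simpa using h0b.mul h1b
      · simpa using h0t.mul h1t
    rw [integral_add hint3 hint5] at key
    linarith
  -- IBP 2 : ∫ φ φ'''' = ∫ φ''²
  have ibp2 : (∫ x : ℝ, φ x * deriv^[4] φ x) = ∫ x : ℝ, (deriv^[2] φ x) ^ 2 := by
    have key : (∫ x : ℝ, φ x * deriv^[4] φ x - (deriv^[2] φ x) ^ 2) = 0 - 0 := by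
      apply integral_of_hasDerivAt_of_tendsto
        (f := fun x => φ x * deriv^[3] φ x - deriv φ x * deriv^[2] φ x)
      · intro x
        have h := ((hd 0 x).mul (hd 3 x)).sub ((hd 1 x).mul (hd 2 x))
        exact h.congr_deriv
          (by simp only [Nat.reduceAdd, e1, e2, e3, e4, Function.iterate_zero, id_eq]; ring)
      · exact hint6.sub hint4
      · simpa using (h0b.mul h3b).sub (h1b.mul h2b)
      · simpa using (h0t.mul h3t).sub (h1t.mul h2t)
    rw [integral_sub hint6 hint4] at key
    linarith
  -- pointwise identity after multiplying the ODE by φ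
  have hpt : ∀ x : ℝ, φ x ^ (q + 2)
      = φ x * deriv^[4] φ x - P * (φ x * deriv^[2] φ x) + c * φ x ^ 2 := by
    intro x
    have h := hode x
    have : φ x * (deriv^[4] φ x - P * deriv^[2] φ x + c * φ x - φ x ^ (q + 1)) = 0 := by
      rw [h]; ring
    have hp : φ x * φ x ^ (q + 1) = φ x ^ (q + 2) := by
      rw [← pow_succ']
    nlinarith [this, hp]
  -- main integral identity (intermediate form)
  have hmain : (∫ x : ℝ, φ x ^ (q + 2))
      = (∫ x : ℝ, (deriv^[2] φ x) ^ 2) + P * (∫ x : ℝ, (deriv φ x) ^ 2)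
        + c * (∫ x : ℝ, φ x ^ 2) := by
    have : (∫ x : ℝ, φ x ^ (q + 2))
        = ∫ x : ℝ, φ x * deriv^[4] φ x - P * (φ x * deriv^[2] φ x) + c * φ x ^ 2 := by
      exact integral_congr_ae (Filter.Eventually.of_forall fun x => hpt x)
    have i1 : Integrable (fun x => φ x * deriv^[4] φ x - P * (φ x * deriv^[2] φ x)) :=
      hint6.sub (hint5.const_mul P)
    have i2 : Integrable (fun x => c * φ x ^ 2) := hφ2.const_mul c
    rw [this, integral_add i1 i2, integral_sub hint6 (hint5.const_mul P),
      integral_const_mul, integral_const_mul, ibp1, ibp2]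
    ring
  -- expansion of ∫ (φ + φ'')²
  have hexp : (∫ x : ℝ, (φ x + deriv^[2] φ x) ^ 2)
      = (∫ x : ℝ, φ x ^ 2) - 2 * (∫ x : ℝ, (deriv φ x) ^ 2)
        + (∫ x : ℝ, (deriv^[2] φ x) ^ 2) := by
    have : (∫ x : ℝ, (φ x + deriv^[2] φ x) ^ 2)
        = ∫ x : ℝ, φ x ^ 2 + 2 * (φ x * deriv^[2] φ x) + (deriv^[2] φ x) ^ 2 := by
      apply integral_congr_ae (Filter.Eventually.of_forall fun x => by ring)
    have i1 : Integrable (fun x => φ x ^ 2 + 2 * (φ x * deriv^[2] φ x)) :=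
      hφ2.add (hint5.const_mul 2)
    rw [this, integral_add i1 hint4, integral_add hφ2 (hint5.const_mul 2),
      integral_const_mul, ibp1]
    ring
  have hcint : (∫ x : ℝ, c * (φ x + deriv^[2] φ x) ^ 2)
      = c * ∫ x : ℝ, (φ x + deriv^[2] φ x) ^ 2 := integral_const_mul c _
  have hidentity : (∫ x : ℝ, φ x ^ (q + 2))
      = (∫ x : ℝ, c * (φ x + deriv^[2] φ x) ^ 2)
        + (P + 2 * c) * (∫ x : ℝ, (deriv φ x) ^ 2)
        + (1 - c) * (∫ x : ℝ, (deriv^[2] φ x) ^ 2) := by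
    rw [hcint, hexp, hmain]; ring
  refine ⟨hidentity, ?_⟩
  rintro hcase hφne
  have hA : 0 ≤ ∫ x : ℝ, φ x ^ 2 := integral_nonneg fun x => sq_nonneg _
  have hB : 0 ≤ ∫ x : ℝ, (deriv φ x) ^ 2 := integral_nonneg fun x => sq_nonneg _
  have hC : 0 ≤ ∫ x : ℝ, (deriv^[2] φ x) ^ 2 := integral_nonneg fun x => sq_nonneg _
  have hS : 0 ≤ ∫ x : ℝ, (φ x + deriv^[2] φ x) ^ 2 := integral_nonneg fun x => sq_nonneg _
  rcases hcase with ⟨hPc, hc0, hc1⟩ | ⟨hP0, hc0⟩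
  · -- case 1 : need ∫(φ+φ'')² > 0
    have hSpos : 0 < ∫ x : ℝ, (φ x + deriv^[2] φ x) ^ 2 := by
      rcases lt_or_eq_of_le hS with h | h
      · exact h
      exfalso
      have hzero : (fun x => (φ x + deriv^[2] φ x) ^ 2) = fun _ => (0 : ℝ) := by
        have hae := (integral_eq_zero_iff_of_nonneg (fun x => sq_nonneg _) hint2).1 h.symm
        exact (Continuous.ae_eq_iff_eq volume
          ((hsm 0).continuous.add (hsm 2).continuous |>.pow 2) continuous_const).1 hae
      have hsum : ∀ x, φ x + deriv^[2] φ x = 0 := by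
        intro x
        have := congrFun hzero x
        exact pow_eq_zero_iff (n := 2) (by norm_num) |>.1 this
      -- energy E = φ² + φ'² is constant with zero limit
      set E : ℝ → ℝ := fun x => φ x ^ 2 + (deriv φ x) ^ 2 with hE
      have hEd : ∀ x, HasDerivAt E 0 x := by
        intro x
        have h1 := ((hd 0 x).pow 2).add ((hd 1 x).pow 2)
        refine h1.congr_deriv ?_
        simp only [Nat.reduceAdd, e1, e2, Function.iterate_zero, id_eq]
        have hs := hsum x
        rw [e2] at hs
        have hs2 : deriv (deriv φ) x = -φ x := by linarith
        rw [hs2]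
        push_cast
        ring
      have hEc : ∀ x, E x = E 0 :=
        fun x => is_const_of_deriv_eq_zero (fun y => (hEd y).differentiableAt)
          (fun y => (hEd y).deriv) x 0
      have hElim : Tendsto E atTop (nhds 0) := by
        simpa using (h0t.pow 2).add (h1t.pow 2)
      have hElim' : Tendsto E atTop (nhds (E 0)) := by
        have : E = fun _ => E 0 := funext hEc
        rw [this]; exact tendsto_const_nhds
      have hE0 : E 0 = 0 := tendsto_nhds_unique hElim' hElim
      apply hφne
      funext x
      have h2 := hEc x
      rw [hE0] at h2
      have h4 : φ x ^ 2 + deriv φ x ^ 2 = 0 := h2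
      have h3 : φ x ^ 2 = 0 := by nlinarith [sq_nonneg (φ x), sq_nonneg (deriv φ x)]
      simpa using pow_eq_zero_iff (n := 2) (by norm_num) |>.1 h3
    rw [hidentity, hcint]
    have := mul_pos hc0 hSpos
    nlinarith [mul_nonneg hPc hB, mul_nonneg (by linarith : (0:ℝ) ≤ 1 - c) hC]
  · -- case 2 : use intermediate form
    have hApos : 0 < ∫ x : ℝ, φ x ^ 2 := by
      rcases lt_or_eq_of_le hA with h | h
      · exact h
      exfalso
      have hzero : (fun x => φ x ^ 2) = fun _ => (0 : ℝ) := by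
        have hae := (integral_eq_zero_iff_of_nonneg (fun x => sq_nonneg _) hφ2).1 h.symm
        exact (Continuous.ae_eq_iff_eq volume (hφ.continuous.pow 2) continuous_const).1 hae
      apply hφne
      funext x
      have := congrFun hzero x
      simpa using pow_eq_zero_iff (n := 2) (by norm_num) |>.1 this
    rw [hmain]
    nlinarith [mul_pos hc0 hApos, mul_nonneg hP0.le hB]
end

section
/- Let P, c ∈ ℝ with either (P + 2c ≥ 0 and 0 < c ≤ 1) or (P > 0 and c > 0), let q ≥ 1 be a natural number, and let φ : ℝ → ℝ be a smooth, not identically zero solution of φ'''' − P φ'' + c φ − φ^{q+1} = 0 decaying exponentially together with its derivatives as x → ±∞ (with all the integrals below finite). Then the quadratic form of the linearized operator 𝓛ψ = ψ'''' − Pψ'' + (c − (q+1)φ^q)ψ evaluated at φ satisfies ∫_ℝ φ·(𝓛φ) dx = −q ∫_ℝ φ^{q+2} dx < 0. In particular, the self-adjoint operator 𝓛 has at least one negative eigenvalue. -/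
open MeasureTheory Filter
open scoped ContDiff

set_option maxHeartbeats 1000000 in
/-- Let `φ` be a smooth, nonzero solitary-wave solution of the steady fifth-order
KdV equation `φ'''' − Pφ'' + cφ − φ^{q+1} = 0`, decaying together with its
derivatives at `±∞`, and suppose `(P+2c ≥ 0 and 0 < c ≤ 1)` or `(P > 0 and c > 0)`.
Then the quadratic form of the linearized operator
`𝓛ψ = ψ'''' − Pψ'' + (c − (q+1)φ^q)ψ` at `φ` satisfies
`∫ φ·𝓛φ = −q∫φ^{q+2} < 0`; in particular `𝓛` has a negative eigenvalue. -/
theorem stmt17 (P c : ℝ)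
    (hpc : (0 ≤ P + 2 * c ∧ 0 < c ∧ c ≤ 1) ∨ (0 < P ∧ 0 < c))
    (q : ℕ) (hq : 1 ≤ q) (φ : ℝ → ℝ)
    (hφ : ContDiff ℝ (⊤ : ℕ∞) φ) (hφ0 : φ ≠ 0)
    (hode : ∀ x : ℝ,
      deriv^[4] φ x - P * deriv^[2] φ x + c * φ x - φ x ^ (q + 1) = 0)
    (hdecay : ∀ k : ℕ, k ≤ 3 →
      Tendsto (deriv^[k] φ) atTop (nhds 0) ∧ Tendsto (deriv^[k] φ) atBot (nhds 0))
    (hintL : Integrable (fun x =>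
      φ x * (deriv^[4] φ x - P * deriv^[2] φ x + (c - (q + 1) * φ x ^ q) * φ x)))
    (hint1 : Integrable (fun x => φ x ^ (q + 2)))
    (hint2 : Integrable (fun x => (φ x + deriv^[2] φ x) ^ 2))
    (hint3 : Integrable (fun x => (deriv φ x) ^ 2))
    (hint4 : Integrable (fun x => (deriv^[2] φ x) ^ 2)) :
    (∫ x : ℝ,
        φ x * (deriv^[4] φ x - P * deriv^[2] φ x + (c - (q + 1) * φ x ^ q) * φ x))
      = -(q : ℝ) * ∫ x : ℝ, φ x ^ (q + 2) ∧
    (∫ x : ℝ,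
        φ x * (deriv^[4] φ x - P * deriv^[2] φ x + (c - (q + 1) * φ x ^ q) * φ x))
      < 0 := by
  -- basic smoothness facts
  have hck : ∀ k : ℕ, ContDiff ℝ ∞ (deriv^[k] φ) := fun k => (hφ.of_le (by simp)).iterate_deriv k
  have hdiff : ∀ k : ℕ, Differentiable ℝ (deriv^[k] φ) :=
    fun k => (hck k).differentiable (by norm_num)
  have hcont : ∀ k : ℕ, Continuous (deriv^[k] φ) := fun k => (hck k).continuous
  have hD : ∀ (k : ℕ) (x : ℝ), HasDerivAt (deriv^[k] φ) (deriv^[k+1] φ x) x := by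
    intro k x
    rw [Function.iterate_succ_apply']
    exact (hdiff k x).hasDerivAt
  have hD0 : ∀ x, HasDerivAt φ (deriv φ x) x := by
    simpa [Function.iterate_one] using hD 0
  have hD1 : ∀ x, HasDerivAt (deriv φ) (deriv^[2] φ x) x := by
    simpa [Function.iterate_one] using hD 1
  have hD2 : ∀ x, HasDerivAt (deriv^[2] φ) (deriv^[3] φ x) x := hD 2
  have hD3 : ∀ x, HasDerivAt (deriv^[3] φ) (deriv^[4] φ x) x := hD 3
  have hcont0 : Continuous φ := hφ.continuous
  have hcont1 : Continuous (deriv φ) := by simpa [Function.iterate_one] using hcont 1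
  have hcont2 : Continuous (deriv^[2] φ) := hcont 2
  -- decay
  have hdec0t := (hdecay 0 (by norm_num)).1
  have hdec0b := (hdecay 0 (by norm_num)).2
  have hdec1t : Tendsto (deriv φ) atTop (nhds 0) := by
    simpa [Function.iterate_one] using (hdecay 1 (by norm_num)).1
  have hdec1b : Tendsto (deriv φ) atBot (nhds 0) := by
    simpa [Function.iterate_one] using (hdecay 1 (by norm_num)).2
  have hdec2t := (hdecay 2 (by norm_num)).1
  have hdec2b := (hdecay 2 (by norm_num)).2
  have hdec3t := (hdecay 3 (by norm_num)).1
  have hdec3b := (hdecay 3 (by norm_num)).2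
  -- integrability of φ²
  have hintφ2 : Integrable (fun x => φ x ^ 2) := by
    refine Integrable.mono' ((hint2.const_mul 2).add (hint4.const_mul 2))
      ((hcont0.pow 2).aestronglyMeasurable) (Eventually.of_forall fun x => ?_)
    simp only [Real.norm_eq_abs, abs_pow, sq_abs, Pi.add_apply]
    nlinarith [sq_nonneg (φ x + 2 * deriv^[2] φ x)]
  -- integrability of φ·φ''
  have hintp2 : Integrable (fun x => φ x * deriv^[2] φ x) := by
    refine Integrable.mono' ((hintφ2.add hint4).const_mul (1/2))
      ((hcont0.mul hcont2).aestronglyMeasurable) (Eventually.of_forall fun x => ?_)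
    simp only [Real.norm_eq_abs, Pi.add_apply]
    have h1 : |φ x * deriv^[2] φ x| = |φ x| * |deriv^[2] φ x| := abs_mul _ _
    nlinarith [sq_nonneg (|φ x| - |deriv^[2] φ x|), sq_abs (φ x), sq_abs (deriv^[2] φ x),
      abs_nonneg (φ x), abs_nonneg (deriv^[2] φ x)]
  -- integrability of φ·φ''''  (via the ODE)
  have hodeF : ∀ x, deriv^[4] φ x = P * deriv^[2] φ x - c * φ x + φ x ^ (q + 1) := by
    intro x; have := hode x; linarith
  have hintp4 : Integrable (fun x => φ x * deriv^[4] φ x) := by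
    have : (fun x => φ x * deriv^[4] φ x)
        = fun x => P * (φ x * deriv^[2] φ x) - c * φ x ^ 2 + φ x ^ (q + 2) := by
      funext x
      rw [hodeF x]; ring
    rw [this]
    exact ((hintp2.const_mul P).sub (hintφ2.const_mul c)).add hint1
  -- first integration by parts : ∫ φ·φ'' = -∫ (φ')²
  have hmulself : Integrable (fun x => deriv φ x * deriv φ x) := by
    have : (fun x => deriv φ x * deriv φ x) = fun x => (deriv φ x) ^ 2 := by
      funext x; ring
    rw [this]; exact hint3
  have ibp1 : ∫ x : ℝ, (deriv φ x * deriv φ x + φ x * deriv^[2] φ x) = 0 := by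
    have h := integral_of_hasDerivAt_of_tendsto
      (f := fun x => φ x * deriv φ x)
      (f' := fun x => deriv φ x * deriv φ x + φ x * deriv^[2] φ x)
      (fun x => (hD0 x).mul (hD1 x))
      (hmulself.add hintp2)
      (by simpa using hdec0b.mul hdec1b)
      (by simpa using hdec0t.mul hdec1t)
    simpa using h
  have hI2 : (∫ x : ℝ, φ x * deriv^[2] φ x) = - ∫ x : ℝ, (deriv φ x) ^ 2 := by
    have hsplit := integral_add hmulself hintp2
    have e : (∫ x : ℝ, deriv φ x * deriv φ x) = ∫ x : ℝ, (deriv φ x) ^ 2 := by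
      congr 1; funext x; ring
    rw [ibp1] at hsplit
    rw [e] at hsplit
    linarith
  -- second integration by parts : ∫ φ·φ'''' = ∫ (φ'')²
  have hintp4' : Integrable (fun x => φ x * deriv^[4] φ x - deriv^[2] φ x * deriv^[2] φ x) := by
    have : (fun x => φ x * deriv^[4] φ x - deriv^[2] φ x * deriv^[2] φ x)
        = fun x => φ x * deriv^[4] φ x - (deriv^[2] φ x) ^ 2 := by
      funext x; ring
    rw [this]; exact hintp4.sub hint4
  have ibp2 : ∫ x : ℝ, (φ x * deriv^[4] φ x - deriv^[2] φ x * deriv^[2] φ x) = 0 := by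
    have h := integral_of_hasDerivAt_of_tendsto
      (f := fun x => φ x * deriv^[3] φ x - deriv φ x * deriv^[2] φ x)
      (f' := fun x => φ x * deriv^[4] φ x - deriv^[2] φ x * deriv^[2] φ x)
      (fun x => by
        have h1 := ((hD0 x).mul (hD3 x)).sub ((hD1 x).mul (hD2 x))
        exact h1.congr_deriv (by ring))
      hintp4'
      (by simpa using (hdec0b.mul hdec3b).sub (hdec1b.mul hdec2b))
      (by simpa using (hdec0t.mul hdec3t).sub (hdec1t.mul hdec2t))
    simpa using h
  have hI4 : (∫ x : ℝ, φ x * deriv^[4] φ x) = ∫ x : ℝ, (deriv^[2] φ x) ^ 2 := by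
    have hmm : Integrable (fun x => deriv^[2] φ x * deriv^[2] φ x) := by
      have : (fun x => deriv^[2] φ x * deriv^[2] φ x) = fun x => (deriv^[2] φ x) ^ 2 := by
        funext x; ring
      rw [this]; exact hint4
    have hsplit := integral_sub hintp4 hmm
    rw [ibp2] at hsplit
    have e : (∫ x : ℝ, deriv^[2] φ x * deriv^[2] φ x) = ∫ x : ℝ, (deriv^[2] φ x) ^ 2 := by
      congr 1; funext x; ring
    rw [e] at hsplit
    linarith
  -- key identity : ∫ φ^{q+2} = ∫(φ'')² + P∫(φ')² + c∫φ²
  have hkey : (∫ x : ℝ, φ x ^ (q + 2))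
      = (∫ x : ℝ, (deriv^[2] φ x) ^ 2) + P * (∫ x : ℝ, (deriv φ x) ^ 2)
        + c * (∫ x : ℝ, φ x ^ 2) := by
    have e : (fun x => φ x ^ (q + 2))
        = fun x => (φ x * deriv^[4] φ x - P * (φ x * deriv^[2] φ x)) + c * φ x ^ 2 := by
      funext x
      linear_combination (-(φ x)) * hode x
    calc (∫ x : ℝ, φ x ^ (q + 2))
        = ∫ x : ℝ, ((φ x * deriv^[4] φ x - P * (φ x * deriv^[2] φ x)) + c * φ x ^ 2) := by
          rw [e]
      _ = (∫ x : ℝ, (φ x * deriv^[4] φ x - P * (φ x * deriv^[2] φ x))) + ∫ x : ℝ, c * φ x ^ 2 :=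
          integral_add (hintp4.sub (hintp2.const_mul P)) (hintφ2.const_mul c)
      _ = ((∫ x : ℝ, φ x * deriv^[4] φ x) - P * (∫ x : ℝ, φ x * deriv^[2] φ x))
            + c * (∫ x : ℝ, φ x ^ 2) := by
          rw [integral_sub hintp4 (hintp2.const_mul P), integral_const_mul, integral_const_mul]
      _ = (∫ x : ℝ, (deriv^[2] φ x) ^ 2) + P * (∫ x : ℝ, (deriv φ x) ^ 2)
            + c * (∫ x : ℝ, φ x ^ 2) := by
          rw [hI4, hI2]; ring
  -- ∫ φ² > 0
  have hC : 0 < ∫ x : ℝ, φ x ^ 2 := by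
    rcases (integral_nonneg (f := fun x => φ x ^ 2) (fun x => sq_nonneg (φ x))).lt_or_eq with h | h
    · exact h
    · exfalso
      have h0 : (fun x => φ x ^ 2) =ᵐ[volume] (0 : ℝ → ℝ) :=
        (integral_eq_zero_iff_of_nonneg (f := fun x => φ x ^ 2) (fun x => sq_nonneg (φ x)) hintφ2).mp h.symm
      have h1 : (fun x => φ x ^ 2) = (0 : ℝ → ℝ) :=
        ((hcont0.pow 2).ae_eq_iff_eq volume continuous_const).mp h0
      apply hφ0
      funext x
      have := congrFun h1 x
      simp only [Pi.zero_apply] at this ⊢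
      exact pow_eq_zero_iff (by norm_num) |>.mp this
  -- ∫ (φ+φ'')² > 0  via the energy argument
  have hDpos : 0 < ∫ x : ℝ, (φ x + deriv^[2] φ x) ^ 2 := by
    rcases (integral_nonneg (f := fun x => (φ x + deriv^[2] φ x) ^ 2) (fun x => sq_nonneg _)).lt_or_eq with h | h
    · exact h
    · exfalso
      have h0 : (fun x => (φ x + deriv^[2] φ x) ^ 2) =ᵐ[volume] (0 : ℝ → ℝ) :=
        (integral_eq_zero_iff_of_nonneg (f := fun x => (φ x + deriv^[2] φ x) ^ 2) (fun x => sq_nonneg _) hint2).mp h.symm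
      have h1 : (fun x => (φ x + deriv^[2] φ x) ^ 2) = (0 : ℝ → ℝ) :=
        (((hcont0.add hcont2).pow 2).ae_eq_iff_eq volume continuous_const).mp h0
      have hz : ∀ x, φ x + deriv^[2] φ x = 0 := by
        intro x
        have := congrFun h1 x
        simp only [Pi.zero_apply] at this
        exact pow_eq_zero_iff (by norm_num) |>.mp this
      -- energy E = φ² + (φ')² is constant
      set E : ℝ → ℝ := fun x => φ x ^ 2 + (deriv φ x) ^ 2 with hE
      have hEd : ∀ x, HasDerivAt E 0 x := by
        intro x
        have h1' := (((hD0 x).mul (hD0 x))).add ((hD1 x).mul (hD1 x))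
        have h2' : deriv φ x * φ x + φ x * deriv φ x
            + (deriv^[2] φ x * deriv φ x + deriv φ x * deriv^[2] φ x) = 0 := by
          linear_combination (2 * deriv φ x) * hz x
        have h3' : E = fun x => φ x * φ x + deriv φ x * deriv φ x := by
          funext y; simp [hE]; ring
        rw [h3', ← h2']
        exact h1'
      have hEconst : ∀ x : ℝ, E x = E 0 := by
        intro x
        exact is_const_of_deriv_eq_zero (fun y => (hEd y).differentiableAt)
          (fun y => (hEd y).deriv) x 0
      have hEt : Tendsto E atTop (nhds 0) := by
        have := (hdec0t.pow 2).add (hdec1t.pow 2)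
        simpa [hE] using this
      have hE0 : E 0 = 0 := by
        have : Tendsto (fun _ : ℝ => E 0) atTop (nhds 0) := by
          refine Tendsto.congr (fun x => hEconst x) hEt
        exact tendsto_nhds_unique tendsto_const_nhds this
      apply hφ0
      funext x
      have h4 := hEconst x
      rw [hE0] at h4
      simp only [hE] at h4
      have : φ x ^ 2 = 0 := by nlinarith [sq_nonneg (φ x), sq_nonneg (deriv φ x)]
      simpa using pow_eq_zero_iff (n := 2) (by norm_num) |>.mp this
  -- expansion of ∫(φ+φ'')²
  have hexp : (∫ x : ℝ, (φ x + deriv^[2] φ x) ^ 2)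
      = (∫ x : ℝ, φ x ^ 2) - 2 * (∫ x : ℝ, (deriv φ x) ^ 2) + ∫ x : ℝ, (deriv^[2] φ x) ^ 2 := by
    have e : (fun x => (φ x + deriv^[2] φ x) ^ 2)
        = fun x => (φ x ^ 2 + 2 * (φ x * deriv^[2] φ x)) + (deriv^[2] φ x) ^ 2 := by
      funext x; ring
    calc (∫ x : ℝ, (φ x + deriv^[2] φ x) ^ 2)
        = ∫ x : ℝ, ((φ x ^ 2 + 2 * (φ x * deriv^[2] φ x)) + (deriv^[2] φ x) ^ 2) := by rw [e]
      _ = (∫ x : ℝ, (φ x ^ 2 + 2 * (φ x * deriv^[2] φ x))) + ∫ x : ℝ, (deriv^[2] φ x) ^ 2 :=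
          integral_add (hintφ2.add (hintp2.const_mul 2)) hint4
      _ = ((∫ x : ℝ, φ x ^ 2) + ∫ x : ℝ, 2 * (φ x * deriv^[2] φ x)) + ∫ x : ℝ, (deriv^[2] φ x) ^ 2 := by
          rw [integral_add hintφ2 (hintp2.const_mul 2)]
      _ = _ := by rw [integral_const_mul, hI2]; ring
  -- positivity of ∫ φ^{q+2}
  have hA : 0 ≤ ∫ x : ℝ, (deriv φ x) ^ 2 := integral_nonneg fun x => sq_nonneg _
  have hB : 0 ≤ ∫ x : ℝ, (deriv^[2] φ x) ^ 2 := integral_nonneg fun x => sq_nonneg _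
  have hKq : 0 < ∫ x : ℝ, φ x ^ (q + 2) := by
    rw [hkey]
    rcases hpc with ⟨h1, h2, h3⟩ | ⟨h1, h2⟩
    · have hD' : c * (∫ x : ℝ, (φ x + deriv^[2] φ x) ^ 2)
          = c * (∫ x : ℝ, φ x ^ 2) - 2 * (c * ∫ x : ℝ, (deriv φ x) ^ 2)
            + c * (∫ x : ℝ, (deriv^[2] φ x) ^ 2) := by rw [hexp]; ring
      have h5 := mul_pos h2 hDpos
      have h6 := mul_nonneg h1 hA
      have h7 : 0 ≤ (1 - c) * ∫ x : ℝ, (deriv^[2] φ x) ^ 2 :=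
        mul_nonneg (by linarith) hB
      nlinarith [h5, h6, h7, hD']
    · nlinarith [mul_nonneg h1.le hA, mul_pos h2 hC, hB]
  -- the pointwise identity for the quadratic form
  have hpt : (fun x => φ x * (deriv^[4] φ x - P * deriv^[2] φ x + (c - (q + 1) * φ x ^ q) * φ x))
      = fun x => -(q : ℝ) * φ x ^ (q + 2) := by
    funext x
    have h := hode x
    have h2 : deriv^[4] φ x - P * deriv^[2] φ x + c * φ x = φ x ^ (q + 1) := by linarith
    calc φ x * (deriv^[4] φ x - P * deriv^[2] φ x + (c - (q + 1) * φ x ^ q) * φ x)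
        = φ x * (deriv^[4] φ x - P * deriv^[2] φ x + c * φ x)
          - (q + 1 : ℝ) * (φ x ^ q * φ x ^ 2) := by ring
      _ = φ x * φ x ^ (q + 1) - (q + 1 : ℝ) * (φ x ^ q * φ x ^ 2) := by rw [h2]
      _ = -(q : ℝ) * φ x ^ (q + 2) := by ring
  have hEq1 : (∫ x : ℝ,
      φ x * (deriv^[4] φ x - P * deriv^[2] φ x + (c - (q + 1) * φ x ^ q) * φ x))
      = -(q : ℝ) * ∫ x : ℝ, φ x ^ (q + 2) := by
    rw [hpt, integral_const_mul]
  refine ⟨hEq1, ?_⟩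
  rw [hEq1]
  have hqpos : (0 : ℝ) < (q : ℝ) := by exact_mod_cast hq
  nlinarith
end
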